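/- arXiv:2110.12860 — 2 statements merged into one kernel-verified Lean document; each statement's English description precedes it below -/
import Mathlib

section
/- Let T = (q1(2q1+q2)p1²)/(q1−q2) + (q2(q1+2q2)p2²)/(q2−q1) and K = q1q2(q1²p1−q2²p2)(p1−p2)²/(q1−q2)³, regarded as rational functions on the phase space with coordinates (q1,q2,p1,p2). Then the canonical Poisson bracket {T,K} = ∂T/∂q1·∂K/∂p1 − ∂T/∂p1·∂K/∂q1 + ∂T/∂q2·∂K/∂p2 − ∂T/∂p2·∂K/∂q2 vanishes identically on the open set where q1 ≠ q2. -/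
/-- Canonical Poisson bracket of two functions on phase space (q1,q2,p1,p2). -/
noncomputable def pb (f g : ℝ → ℝ → ℝ → ℝ → ℝ) (q1 q2 p1 p2 : ℝ) : ℝ :=
  (deriv (fun x => f x q2 p1 p2) q1) * (deriv (fun x => g q1 q2 x p2) p1)
  - (deriv (fun x => f q1 q2 x p2) p1) * (deriv (fun x => g x q2 p1 p2) q1)
  + (deriv (fun x => f q1 x p1 p2) q2) * (deriv (fun x => g q1 q2 p1 x) p2)
  - (deriv (fun x => f q1 q2 p1 x) p2) * (deriv (fun x => g q1 x p1 p2) q2)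

noncomputable def T (q1 q2 p1 p2 : ℝ) : ℝ :=
  q1 * (2*q1 + q2) * p1^2 / (q1 - q2) + q2 * (q1 + 2*q2) * p2^2 / (q2 - q1)

noncomputable def K (q1 q2 p1 p2 : ℝ) : ℝ :=
  q1 * q2 * (q1^2*p1 - q2^2*p2) * (p1 - p2)^2 / (q1 - q2)^3

theorem stmt0 (q1 q2 p1 p2 : ℝ) (h : q1 ≠ q2) :
    pb T K q1 q2 p1 p2 = 0 := by
  have hne1 : q1 - q2 ≠ 0 := sub_ne_zero.mpr h
  have hne2 : q2 - q1 ≠ 0 := sub_ne_zero.mpr (Ne.symm h)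
  have hne3 : (q1 - q2)^3 ≠ 0 := pow_ne_zero _ hne1
  have hne4 : (q2 - q1)^3 ≠ 0 := pow_ne_zero _ hne2
  have hA := ((((hasDerivAt_id q1).mul (((hasDerivAt_id q1).const_mul 2).add_const q2)).mul_const
      (p1^2)).div ((hasDerivAt_id q1).sub_const q2) hne1).add
    (((((hasDerivAt_id q1).add_const (2*q2)).const_mul q2).mul_const (p2^2)).div
      ((hasDerivAt_id q1).const_sub q2) hne2)
  have hB := (((((hasDerivAt_id p1).const_mul (q1^2)).sub_const (q2^2*p2)).const_mul
      (q1*q2)).mul (((hasDerivAt_id p1).sub_const p2).pow 2)).div_const ((q1-q2)^3)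
  have hC := (((hasDerivAt_pow 2 p1).const_mul (q1*(2*q1+q2))).div_const (q1-q2)).add_const
      (q2*(q1+2*q2)*p2^2/(q2-q1))
  have hD := ((((hasDerivAt_id q1).mul_const q2).mul
      (((hasDerivAt_pow 2 q1).mul_const p1).sub_const (q2^2*p2))).mul_const
      ((p1-p2)^2)).div (((hasDerivAt_id q1).sub_const q2).pow 3) hne3
  have hE := (((((hasDerivAt_id q2).const_add (2*q1)).const_mul q1).mul_const (p1^2)).div
      ((hasDerivAt_id q2).const_sub q1) hne1).add
    ((((hasDerivAt_id q2).mul (((hasDerivAt_id q2).const_mul 2).const_add q1)).mul_const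
      (p2^2)).div ((hasDerivAt_id q2).sub_const q1) hne2)
  have hF := (((((hasDerivAt_id p2).const_mul (q2^2)).const_sub (q1^2*p1)).const_mul
      (q1*q2)).mul (((hasDerivAt_id p2).const_sub p1).pow 2)).div_const ((q1-q2)^3)
  have hG := ((((hasDerivAt_pow 2 p2).const_mul (q2*(q1+2*q2))).div_const (q2-q1)).const_add
      (q1*(2*q1+q2)*p1^2/(q1-q2)))
  have hH := ((((hasDerivAt_id q2).const_mul q1).mul
      (((hasDerivAt_pow 2 q2).mul_const p2).const_sub (q1^2*p1))).mul_const
      ((p1-p2)^2)).div (((hasDerivAt_id q2).const_sub q1).pow 3) hne3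
  simp only [id_eq, Pi.mul_def, Pi.div_def, Pi.add_def, Pi.pow_def] at hA hB hC hD hE hF hG hH
  simp only [pb, T, K]
  rw [hA.deriv, hB.deriv, hC.deriv, hD.deriv, hE.deriv, hF.deriv, hG.deriv, hH.deriv]
  field_simp
  ring
end

section
/- Let T = (q1(2q1+q2)p1²)/(q1−q2) + (q2(q1+2q2)p2²)/(q2−q1) and L = (q1²p1−q2²p2)²(q1p1²−q2p2²)/(q1−q2)³. Then the canonical Poisson bracket {T,L} vanishes identically on the open set where q1 ≠ q2. -/
noncomputable def L (q1 q2 p1 p2 : ℝ) : ℝ :=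
  (q1^2*p1 - q2^2*p2)^2 * (q1*p1^2 - q2*p2^2) / (q1 - q2)^3

theorem stmt1 (q1 q2 p1 p2 : ℝ) (h : q1 ≠ q2) :
    pb T L q1 q2 p1 p2 = 0 := by
  have hd : q1 - q2 ≠ 0 := sub_ne_zero.mpr h
  have hd' : q2 - q1 ≠ 0 := sub_ne_zero.mpr (Ne.symm h)
  have hd3 : (q1 - q2)^3 ≠ 0 := pow_ne_zero 3 hd
  have hTq1 : HasDerivAt (fun x => T x q2 p1 p2)
      (((4*q1+q2)*p1^2*(q1-q2) - q1*(2*q1+q2)*p1^2) / (q1-q2)^2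
        + (q2*p2^2*(q2-q1) + q2*(q1+2*q2)*p2^2) / (q2-q1)^2) q1 := by
    unfold T
    have H := ((((hasDerivAt_id q1).mul (((hasDerivAt_id q1).const_mul 2).add_const q2)).mul_const
        (p1^2)).div ((hasDerivAt_id q1).sub_const q2) hd).add
      (((((hasDerivAt_id q1).add_const (2*q2)).const_mul q2).mul_const (p2^2)).div
        ((hasDerivAt_const q1 q2).sub (hasDerivAt_id q1)) hd')
    refine H.congr_deriv ?_
    simp only [id, Nat.cast_ofNat, Pi.add_apply, Pi.sub_apply, Pi.mul_apply, Pi.div_apply, Pi.pow_apply]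
    ring
  have hTq2 : HasDerivAt (fun x => T q1 x p1 p2)
      ((q1*p1^2*(q1-q2) + q1*(2*q1+q2)*p1^2) / (q1-q2)^2
        + ((q1+4*q2)*p2^2*(q2-q1) - q2*(q1+2*q2)*p2^2) / (q2-q1)^2) q2 := by
    unfold T
    have H := ((((hasDerivAt_const q2 q1).mul ((hasDerivAt_const q2 (2*q1)).add
        (hasDerivAt_id q2))).mul_const (p1^2)).div
        ((hasDerivAt_const q2 q1).sub (hasDerivAt_id q2)) hd).add
      ((((hasDerivAt_id q2).mul ((hasDerivAt_const q2 q1).add ((hasDerivAt_id q2).const_mul 2))).mul_const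
        (p2^2)).div ((hasDerivAt_id q2).sub_const q1) hd')
    refine H.congr_deriv ?_
    simp only [id, Nat.cast_ofNat, Pi.add_apply, Pi.sub_apply, Pi.mul_apply, Pi.div_apply, Pi.pow_apply]
    ring
  have hTp1 : HasDerivAt (fun x => T q1 q2 x p2)
      (q1*(2*q1+q2)*2*p1/(q1-q2)) p1 := by
    unfold T
    have H := ((((hasDerivAt_pow 2 p1).const_mul (q1*(2*q1+q2))).div_const (q1-q2)).add_const
      (q2*(q1+2*q2)*p2^2/(q2-q1)))
    refine H.congr_deriv ?_
    simp only [Nat.cast_ofNat]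
    ring
  have hTp2 : HasDerivAt (fun x => T q1 q2 p1 x)
      (q2*(q1+2*q2)*2*p2/(q2-q1)) p2 := by
    unfold T
    have H := (((hasDerivAt_pow 2 p2).const_mul (q2*(q1+2*q2))).div_const (q2-q1)).const_add
      (q1*(2*q1+q2)*p1^2/(q1-q2))
    refine H.congr_deriv ?_
    simp only [Nat.cast_ofNat]
    ring
  have hLq1 : HasDerivAt (fun x => L x q2 p1 p2)
      ((((2*(q1^2*p1-q2^2*p2)*(2*q1*p1))*(q1*p1^2-q2*p2^2)
          + (q1^2*p1-q2^2*p2)^2*p1^2)*(q1-q2)^3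
        - (q1^2*p1-q2^2*p2)^2*(q1*p1^2-q2*p2^2)*(3*(q1-q2)^2))/((q1-q2)^3)^2) q1 := by
    unfold L
    have H := (((((hasDerivAt_pow 2 q1).mul_const p1).sub_const (q2^2*p2)).pow 2).mul
        (((hasDerivAt_id q1).mul_const (p1^2)).sub_const (q2*p2^2))).div
      (((hasDerivAt_id q1).sub_const q2).pow 3) hd3
    refine H.congr_deriv ?_
    simp only [id, Nat.cast_ofNat, Pi.add_apply, Pi.sub_apply, Pi.mul_apply, Pi.div_apply, Pi.pow_apply]
    ring
  have hLq2 : HasDerivAt (fun x => L q1 x p1 p2)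
      ((((2*(q1^2*p1-q2^2*p2)*(-(2*q2*p2)))*(q1*p1^2-q2*p2^2)
          + (q1^2*p1-q2^2*p2)^2*(-p2^2))*(q1-q2)^3
        - (q1^2*p1-q2^2*p2)^2*(q1*p1^2-q2*p2^2)*(-(3*(q1-q2)^2)))/((q1-q2)^3)^2) q2 := by
    unfold L
    have H := ((((hasDerivAt_const q2 (q1^2*p1)).sub ((hasDerivAt_pow 2 q2).mul_const p2)).pow 2).mul
        ((hasDerivAt_const q2 (q1*p1^2)).sub ((hasDerivAt_id q2).mul_const (p2^2)))).div
      (((hasDerivAt_const q2 q1).sub (hasDerivAt_id q2)).pow 3) hd3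
    refine H.congr_deriv ?_
    simp only [id, Nat.cast_ofNat, Pi.add_apply, Pi.sub_apply, Pi.mul_apply, Pi.div_apply, Pi.pow_apply]
    ring
  have hLp1 : HasDerivAt (fun x => L q1 q2 x p2)
      ((2*(q1^2*p1-q2^2*p2)*q1^2*(q1*p1^2-q2*p2^2)
        + (q1^2*p1-q2^2*p2)^2*(q1*(2*p1)))/(q1-q2)^3) p1 := by
    unfold L
    have H := (((((hasDerivAt_id p1).const_mul (q1^2)).sub_const (q2^2*p2)).pow 2).mul
      (((hasDerivAt_pow 2 p1).const_mul q1).sub_const (q2*p2^2))).div_const ((q1-q2)^3)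
    refine H.congr_deriv ?_
    simp only [id, Nat.cast_ofNat, Pi.add_apply, Pi.sub_apply, Pi.mul_apply, Pi.div_apply, Pi.pow_apply]
    ring
  have hLp2 : HasDerivAt (fun x => L q1 q2 p1 x)
      ((-(2*(q1^2*p1-q2^2*p2)*q2^2)*(q1*p1^2-q2*p2^2)
        + (q1^2*p1-q2^2*p2)^2*(-(q2*(2*p2))))/(q1-q2)^3) p2 := by
    unfold L
    have H := ((((hasDerivAt_const p2 (q1^2*p1)).sub ((hasDerivAt_id p2).const_mul (q2^2))).pow 2).mul
      ((hasDerivAt_const p2 (q1*p1^2)).sub ((hasDerivAt_pow 2 p2).const_mul q2))).div_const ((q1-q2)^3)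
    refine H.congr_deriv ?_
    simp only [id, Nat.cast_ofNat, Pi.add_apply, Pi.sub_apply, Pi.mul_apply, Pi.div_apply, Pi.pow_apply]
    ring
  unfold pb
  rw [hTq1.deriv, hTq2.deriv, hTp1.deriv, hTp2.deriv,
      hLq1.deriv, hLq2.deriv, hLp1.deriv, hLp2.deriv]
  field_simp
  ring
end
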